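/- arXiv:2206.10167 — 7 statements merged into one kernel-verified Lean document; each statement's English description precedes it below -/
import Mathlib

section
/- Let $A, B, C$ be $p \times p$ positive semidefinite real matrices and $z > 0$. Then $|\mathrm{Tr}(C(zI+A)^{-1}) - \mathrm{Tr}(C(zI+B)^{-1})| \le \mathrm{rank}(A-B) \cdot \|C\| / z$, where $\|C\|$ denotes the operator norm. -/
/-!
By the resolvent identity `(zI+A)⁻¹ - (zI+B)⁻¹ = (zI+A)⁻¹ (B - A) (zI+B)⁻¹`, the difference `M` of
the two resolvents has the same rank as `A - B`. Both resolvents lie between `0` and `z⁻¹ I`, so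
every eigenvalue of the symmetric matrix `M` lies in `[-z⁻¹, z⁻¹]`. In an orthonormal eigenbasis
`(vᵢ)` of `M`, `Tr (C M) = ∑ μᵢ ⟪vᵢ, C vᵢ⟫`: only the `rank M` nonzero eigenvalues contribute,
each by at most `‖C‖ / z`.
-/

open Matrix

/-- The spectral (operator) norm of a real square matrix. -/
noncomputable def opNorm {p : ℕ} (M : Matrix (Fin p) (Fin p) ℝ) : ℝ :=
  ‖Matrix.toEuclideanCLM (𝕜 := ℝ) M‖

open scoped RealInnerProductSpace

namespace Matrix

lemma rank_neg {m n R : Type*} [Fintype n] [CommRing R] (X : Matrix m n R) :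
    (-X).rank = X.rank := by
  have : (-X).mulVecLin = -X.mulVecLin := LinearMap.ext fun v => neg_mulVec v X
  rw [Matrix.rank, Matrix.rank, this, LinearMap.range_neg]

lemma rank_inv_sub_inv {n R : Type*} [Fintype n] [DecidableEq n] [CommRing R]
    {S T : Matrix n n R} (hS : IsUnit S.det) (hT : IsUnit T.det) :
    (S⁻¹ - T⁻¹).rank = (S - T).rank := by
  have : S⁻¹ - T⁻¹ = S⁻¹ * -(S - T) * T⁻¹ := by
    rw [neg_sub, mul_sub, sub_mul, mul_nonsing_inv_cancel_right _ _ hT, nonsing_inv_mul _ hS,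
      one_mul]
  rw [this, rank_mul_eq_left_of_isUnit_det _ _ (isUnit_nonsing_inv_det _ hT),
    rank_mul_eq_right_of_isUnit_det _ _ (isUnit_nonsing_inv_det _ hS), rank_neg]

variable {n : Type*} [DecidableEq n]

lemma PosSemidef.posDef_smul_one_add {A : Matrix n n ℝ} (hA : A.PosSemidef) {z : ℝ} (hz : 0 < z) :
    (z • (1 : Matrix n n ℝ) + A).PosDef :=
  (PosDef.one.smul hz).add_posSemidef hA

variable [Fintype n]

lemma PosSemidef.dotProduct_inv_smul_one_add_mulVec_mem_Icc {A : Matrix n n ℝ}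
    (hA : A.PosSemidef) {z : ℝ} (hz : 0 < z) (x : n → ℝ) :
    x ⬝ᵥ ((z • (1 : Matrix n n ℝ) + A)⁻¹ *ᵥ x) ∈ Set.Icc 0 ((x ⬝ᵥ x) / z) := by
  set S := z • (1 : Matrix n n ℝ) + A
  set y := S⁻¹ *ᵥ x
  have hS : IsUnit S.det := (isUnit_iff_isUnit_det _).mp (hA.posDef_smul_one_add hz).isUnit
  have hSy : S *ᵥ y = x := by rw [mulVec_mulVec, mul_nonsing_inv _ hS, one_mulVec]
  have hxy : x ⬝ᵥ y = z * (y ⬝ᵥ y) + y ⬝ᵥ (A *ᵥ y) := by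
    rw [← hSy, add_mulVec, smul_mulVec, one_mulVec, add_dotProduct, smul_dotProduct,
      dotProduct_comm (A *ᵥ y), smul_eq_mul]
  have hyy : 0 ≤ y ⬝ᵥ y := by simpa using dotProduct_self_star_nonneg y
  have hAy : 0 ≤ y ⬝ᵥ (A *ᵥ y) := by simpa using hA.dotProduct_mulVec_nonneg y
  -- expanding `0 ≤ ‖x - z y‖²` and using `z ‖y‖² ≤ x ⬝ᵥ y` gives `z (x ⬝ᵥ y) ≤ ‖x‖²`
  have hdiff : 0 ≤ (x - z • y) ⬝ᵥ (x - z • y) := by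
    simpa using dotProduct_self_star_nonneg (x - z • y)
  simp only [sub_dotProduct, dotProduct_sub, smul_dotProduct, dotProduct_smul, smul_eq_mul,
    dotProduct_comm y x] at hdiff
  refine ⟨by nlinarith, ?_⟩
  rw [le_div_iff₀ hz]
  nlinarith

lemma abs_eigenvalues_inv_sub_inv_le {A B : Matrix n n ℝ} (hA : A.PosSemidef) (hB : B.PosSemidef)
    {z : ℝ} (hz : 0 < z)
    (hM : ((z • (1 : Matrix n n ℝ) + A)⁻¹ - (z • (1 : Matrix n n ℝ) + B)⁻¹).IsHermitian)
    (i : n) : |hM.eigenvalues i| ≤ z⁻¹ := by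
  set v := (hM.eigenvectorBasis i).ofLp
  have hv : v ⬝ᵥ v = 1 := by
    have h := real_inner_self_eq_norm_sq (hM.eigenvectorBasis i)
    rw [hM.eigenvectorBasis.orthonormal.1 i, one_pow, EuclideanSpace.inner_eq_star_dotProduct] at h
    simpa using h
  obtain ⟨hA0, hA1⟩ := hA.dotProduct_inv_smul_one_add_mulVec_mem_Icc hz v
  obtain ⟨hB0, hB1⟩ := hB.dotProduct_inv_smul_one_add_mulVec_mem_Icc hz v
  rw [hv, one_div] at hA1 hB1
  have hμ := hM.eigenvalues_eq i
  simp only [star_trivial, RCLike.re_to_real, sub_mulVec, dotProduct_sub] at hμ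
  rw [hμ, abs_sub_le_iff]
  constructor <;> linarith

lemma IsHermitian.trace_mul_eq_sum {M : Matrix n n ℝ} (hM : M.IsHermitian) (C : Matrix n n ℝ) :
    (C * M).trace = ∑ i, hM.eigenvalues i * ⟪hM.eigenvectorBasis i,
      toEuclideanCLM (𝕜 := ℝ) C (hM.eigenvectorBasis i)⟫ := by
  rw [← Matrix.trace_toLin_eq _ (PiLp.basisFun 2 ℝ n), ← toLpLin_eq_toLin,
    LinearMap.trace_eq_sum_inner _ hM.eigenvectorBasis]
  refine Finset.sum_congr rfl fun i _ => ?_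
  rw [toLpLin_mul_same, LinearMap.comp_apply, toLpLin_apply, ofLp_toLpLin, toLin'_apply,
    hM.mulVec_eigenvectorBasis, mulVec_smul, ← inner_smul_right]
  rfl

lemma IsHermitian.abs_trace_mul_le {M : Matrix n n ℝ} (hM : M.IsHermitian) (C : Matrix n n ℝ)
    {r : ℝ} (hr : ∀ i, |hM.eigenvalues i| ≤ r) :
    |(C * M).trace| ≤ M.rank * ‖toEuclideanCLM (𝕜 := ℝ) C‖ * r := by
  set T := toEuclideanCLM (𝕜 := ℝ) C
  have hinner : ∀ i, |⟪hM.eigenvectorBasis i, T (hM.eigenvectorBasis i)⟫| ≤ ‖T‖ := fun i =>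
    calc _ ≤ ‖hM.eigenvectorBasis i‖ * ‖T (hM.eigenvectorBasis i)‖ := abs_real_inner_le_norm _ _
      _ ≤ ‖T‖ := by
        rw [hM.eigenvectorBasis.orthonormal.1 i, one_mul]
        exact T.unit_le_opNorm _ (hM.eigenvectorBasis.orthonormal.1 i).le
  calc |(C * M).trace|
      ≤ ∑ i, |hM.eigenvalues i * ⟪hM.eigenvectorBasis i, T (hM.eigenvectorBasis i)⟫| := by
        rw [hM.trace_mul_eq_sum]; exact Finset.abs_sum_le_sum_abs _ _
    _ ≤ ∑ i, if hM.eigenvalues i ≠ 0 then ‖T‖ * r else 0 := by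
        refine Finset.sum_le_sum fun i _ => ?_
        split_ifs with h
        · rw [abs_mul, mul_comm]
          exact mul_le_mul (hinner i) (hr i) (abs_nonneg _) (norm_nonneg _)
        · simp [not_not.mp h]
    _ = M.rank * ‖T‖ * r := by
        rw [Finset.sum_ite, Finset.sum_const_zero, add_zero, Finset.sum_const, nsmul_eq_mul,
          hM.rank_eq_card_non_zero_eigs, Fintype.card_subtype, mul_assoc]

end Matrix

theorem stmt0_general {p : ℕ} (A B C : Matrix (Fin p) (Fin p) ℝ)
    (hA : A.PosSemidef) (hB : B.PosSemidef)
    (z : ℝ) (hz : 0 < z) :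
    |(C * (z • (1 : Matrix (Fin p) (Fin p) ℝ) + A)⁻¹).trace
        - (C * (z • (1 : Matrix (Fin p) (Fin p) ℝ) + B)⁻¹).trace|
      ≤ ((A - B).rank : ℝ) * opNorm C / z := by
  have hSA := hA.posDef_smul_one_add hz
  have hSB := hB.posDef_smul_one_add hz
  have hM := hSA.inv.isHermitian.sub hSB.inv.isHermitian
  have hrank := rank_inv_sub_inv ((isUnit_iff_isUnit_det _).mp hSA.isUnit)
    ((isUnit_iff_isUnit_det _).mp hSB.isUnit)
  rw [add_sub_add_left_eq_sub] at hrank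
  rw [← trace_sub, ← mul_sub, ← hrank, opNorm, div_eq_mul_inv]
  exact hM.abs_trace_mul_le C (abs_eigenvalues_inv_sub_inv_le hA hB hz hM)

theorem stmt0 {p : ℕ} (A B C : Matrix (Fin p) (Fin p) ℝ)
    (hA : A.PosSemidef) (hB : B.PosSemidef) (hC : C.PosSemidef)
    (z : ℝ) (hz : 0 < z) :
    |(C * (z • (1 : Matrix (Fin p) (Fin p) ℝ) + A)⁻¹).trace
        - (C * (z • (1 : Matrix (Fin p) (Fin p) ℝ) + B)⁻¹).trace|
      ≤ ((A - B).rank : ℝ) * opNorm C / z :=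
  stmt0_general A B C hA hB z hz
end

section
/- Let $x_1, \dots, x_n \in \mathbb{R}^p$ with $S = \frac{1}{n}\sum_i x_i x_i^\top$ and $S_{-i} = S - \frac{1}{n} x_i x_i^\top$ both invertible, and let $\gamma = p/n < 1$. Then $\left| \frac{1}{p} x_i^\top S^{-1} x_i - 1 \right| \le (1-\gamma) \left| \frac{1}{p} x_i^\top S_{-i}^{-1} x_i - \frac{1}{1-\gamma} \right|$. -/
open Matrix

/-!
Write `γ = p / n` and `q = p⁻¹ xᵢᵀ S₋ᵢ⁻¹ xᵢ ≥ 0`. Since `S = S₋ᵢ + n⁻¹ xᵢ xᵢᵀ`, the Sherman–Morrison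
identity gives `p⁻¹ xᵢᵀ S⁻¹ xᵢ = q / (1 + γ q)`, and then
`|q / (1 + γ q) - 1| = |(1 - γ) q - 1| / (1 + γ q) ≤ |(1 - γ) q - 1| = (1 - γ) |q - (1 - γ)⁻¹|`.
-/

/-- Sample covariance matrix `S = (1/n) ∑ xᵢ xᵢᵀ`. -/
noncomputable def sampleCov {n p : ℕ} (x : Fin n → Fin p → ℝ) : Matrix (Fin p) (Fin p) ℝ :=
  (n : ℝ)⁻¹ • ∑ j, vecMulVec (x j) (x j)

/-- Leave-one-out sample covariance `S₋ᵢ = S - (1/n) xᵢ xᵢᵀ`. -/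
noncomputable def sampleCovLoo {n p : ℕ} (x : Fin n → Fin p → ℝ) (i : Fin n) :
    Matrix (Fin p) (Fin p) ℝ :=
  sampleCov x - (n : ℝ)⁻¹ • vecMulVec (x i) (x i)

theorem Matrix.add_smul_vecMulVec_mulVec_inv_mulVec {K m : Type*} [Field K] [Fintype m]
    [DecidableEq m] {A : Matrix m m K} (hA : IsUnit A.det) (c : K) (u w : m → K) :
    (A + c • vecMulVec u w) *ᵥ (A⁻¹ *ᵥ u) = (1 + c * (w ⬝ᵥ A⁻¹ *ᵥ u)) • u := by
  rw [add_mulVec, mulVec_mulVec, mul_nonsing_inv _ hA, one_mulVec, smul_mulVec,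
    vecMulVec_mulVec, op_smul_eq_smul, smul_smul, add_smul, one_smul]

theorem Matrix.smul_inv_add_smul_vecMulVec_mulVec {K m : Type*} [Field K] [Fintype m]
    [DecidableEq m] {A : Matrix m m K} (hA : IsUnit A.det) (c : K) (u w : m → K)
    (hS : IsUnit (A + c • vecMulVec u w).det) :
    (1 + c * (w ⬝ᵥ A⁻¹ *ᵥ u)) • ((A + c • vecMulVec u w)⁻¹ *ᵥ u) = A⁻¹ *ᵥ u := by
  rw [← mulVec_smul, ← add_smul_vecMulVec_mulVec_inv_mulVec hA, mulVec_mulVec,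
    nonsing_inv_mul _ hS, one_mulVec]

theorem abs_sub_one_le_of_mul_one_add_mul_eq {σ r γ : ℝ} (hr : 0 ≤ r) (hγ₀ : 0 ≤ γ)
    (hγ₁ : γ < 1) (h : σ * (1 + γ * r) = r) :
    |σ - 1| ≤ (1 - γ) * |r - (1 - γ)⁻¹| := by
  have hd : 0 < 1 + γ * r := by positivity
  have hσ : σ - 1 = ((1 - γ) * r - 1) / (1 + γ * r) := by
    rw [eq_div_iff hd.ne', sub_mul, h]; ring
  have hr' : (1 - γ) * |r - (1 - γ)⁻¹| = |(1 - γ) * r - 1| := by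
    rw [← abs_of_pos (sub_pos.2 hγ₁), ← abs_mul, abs_of_pos (sub_pos.2 hγ₁), mul_sub,
      mul_inv_cancel₀ (sub_pos.2 hγ₁).ne']
  rw [hσ, hr', abs_div, abs_of_pos hd]
  exact div_le_self (abs_nonneg _) (le_add_of_nonneg_right (by positivity))

theorem sampleCov_eq_sampleCovLoo_add {n p : ℕ} (x : Fin n → Fin p → ℝ) (i : Fin n) :
    sampleCov x = sampleCovLoo x i + (n : ℝ)⁻¹ • vecMulVec (x i) (x i) :=
  (sub_add_cancel _ _).symm

theorem Matrix.PosDef.sampleCov {n p : ℕ} {x : Fin n → Fin p → ℝ} {i : Fin n}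
    (h : (sampleCovLoo x i).PosDef) : (sampleCov x).PosDef := by
  rw [sampleCov_eq_sampleCovLoo_add x i]
  exact h.add_posSemidef ((posSemidef_vecMulVec_self_star (x i)).smul (by positivity))

theorem stmt2_general {n p : ℕ} (hp : 0 < p) (x : Fin n → Fin p → ℝ) (i : Fin n)
    (hSipos : (sampleCovLoo x i).PosDef)
    (hγ : (p : ℝ) / n < 1) :
    |(p : ℝ)⁻¹ * (x i ⬝ᵥ ((sampleCov x)⁻¹ *ᵥ x i)) - 1|
      ≤ (1 - (p : ℝ) / n) *
          |(p : ℝ)⁻¹ * (x i ⬝ᵥ ((sampleCovLoo x i)⁻¹ *ᵥ x i)) - (1 - (p : ℝ) / n)⁻¹| := by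
  set t := x i ⬝ᵥ ((sampleCovLoo x i)⁻¹ *ᵥ x i)
  set s := x i ⬝ᵥ ((sampleCov x)⁻¹ *ᵥ x i)
  have ht : 0 ≤ t := by simpa using hSipos.inv.posSemidef.re_dotProduct_nonneg (x i)
  have hS : IsUnit (sampleCovLoo x i + (n : ℝ)⁻¹ • vecMulVec (x i) (x i)).det := by
    rw [← sampleCov_eq_sampleCovLoo_add]
    exact hSipos.sampleCov.det_pos.ne'.isUnit
  have hSM : s * (1 + (n : ℝ)⁻¹ * t) = t := by
    have := congrArg (x i ⬝ᵥ ·) <|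
      smul_inv_add_smul_vecMulVec_mulVec hSipos.det_pos.ne'.isUnit (n : ℝ)⁻¹ (x i) (x i) hS
    simpa [← sampleCov_eq_sampleCovLoo_add, dotProduct_smul, mul_comm] using this
  refine abs_sub_one_le_of_mul_one_add_mul_eq (by positivity) (by positivity) hγ ?_
  have hγt : (p : ℝ) / n * ((p : ℝ)⁻¹ * t) = (n : ℝ)⁻¹ * t := by field_simp
  rw [hγt, mul_assoc, hSM]

theorem stmt2 {n p : ℕ} (hn : 0 < n) (hp : 0 < p) (x : Fin n → Fin p → ℝ) (i : Fin n)
    (hS : IsUnit (sampleCov x).det) (hSi : IsUnit (sampleCovLoo x i).det)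
    (hSipos : (sampleCovLoo x i).PosDef)
    (hγ : (p : ℝ) / n < 1) :
    |(p : ℝ)⁻¹ * (x i ⬝ᵥ ((sampleCov x)⁻¹ *ᵥ x i)) - 1|
      ≤ (1 - (p : ℝ) / n) *
          |(p : ℝ)⁻¹ * (x i ⬝ᵥ ((sampleCovLoo x i)⁻¹ *ᵥ x i)) - (1 - (p : ℝ) / n)⁻¹| :=
  stmt2_general hp x i hSipos hγ
end

section
/- Let $h : \mathbb{R}_+^n \to \mathbb{R}_+^n$ be a monotone (order-preserving with respect to the coordinatewise order), positive, scalable map, meaning: $h(d) > 0$ for all $d \ge 0$; $d \ge d'$ implies $h(d) \ge h(d')$; and for all $\alpha > 1$, $\alpha h(d) \ge h(\alpha d)$ with strict inequality in every coordinate. Suppose $h$ has two fixed points $d \ne d'$ with strictly positive coordinates. Then a contradiction follows; i.e., $h$ has at most one fixed point with strictly positive coordinates. -/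
private lemma stmt3_aux {n : ℕ} (h : (Fin n → ℝ) → (Fin n → ℝ))
    (hmono : ∀ d d' : Fin n → ℝ, 0 ≤ d' → d' ≤ d → h d' ≤ h d)
    (hscale : ∀ α : ℝ, 1 < α → ∀ d : Fin n → ℝ, 0 ≤ d → ∀ j, h (α • d) j < α * h d j)
    (d d' : Fin n → ℝ) (hd : ∀ j, 0 < d j) (hd' : ∀ j, 0 < d' j)
    (hfix : h d = d) (hfix' : h d' = d') (hj : ∃ j, d' j < d j) : False := by
  obtain ⟨j0, hj0⟩ := hj
  obtain ⟨l, -, hl⟩ := Finset.exists_max_image Finset.univ (fun j => d j / d' j)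
    ⟨j0, Finset.mem_univ j0⟩
  set α := d l / d' l with hαdef
  have hα1 : 1 < α := lt_of_lt_of_le ((one_lt_div (hd' j0)).2 hj0) (hl j0 (Finset.mem_univ j0))
  have hd'pos : (0:Fin n → ℝ) ≤ d' := fun j => (hd' j).le
  have hdpos : (0:Fin n → ℝ) ≤ d := fun j => (hd j).le
  have hle : d ≤ α • d' := by
    intro j
    have := hl j (Finset.mem_univ j)
    have := (div_le_iff₀ (hd' j)).mp this
    simpa [smul_eq_mul, mul_comm] using this
  have h1 : d l ≤ h (α • d') l := by
    have := hmono (α • d') d hdpos hle l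
    rwa [hfix] at this
  have h2 : h (α • d') l < α * h d' l := hscale α hα1 d' hd'pos l
  rw [hfix'] at h2
  have : α * d' l = d l := div_mul_cancel₀ _ (hd' l).ne'
  rw [this] at h2
  exact lt_irrefl _ (lt_of_le_of_lt h1 h2)

theorem stmt3 {n : ℕ} (h : (Fin n → ℝ) → (Fin n → ℝ))
    (hpos : ∀ d : Fin n → ℝ, 0 ≤ d → ∀ j, 0 < h d j)
    (hmono : ∀ d d' : Fin n → ℝ, 0 ≤ d' → d' ≤ d → h d' ≤ h d)
    (hscale : ∀ α : ℝ, 1 < α → ∀ d : Fin n → ℝ, 0 ≤ d → ∀ j, h (α • d) j < α * h d j)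
    (d d' : Fin n → ℝ) (hd : ∀ j, 0 < d j) (hd' : ∀ j, 0 < d' j)
    (hfix : h d = d) (hfix' : h d' = d') (hne : d ≠ d') : False := by
  by_cases hc : ∃ j, d' j < d j
  · exact stmt3_aux h hmono hscale d d' hd hd' hfix hfix' hc
  · push_neg at hc
    have : ∃ j, d j < d' j := by
      by_contra hc2
      push_neg at hc2
      exact hne (funext fun j => le_antisymm (hc j) (hc2 j))
    exact stmt3_aux h hmono hscale d' d hd' hd hfix' hfix this
end

section
/- Let $u : (0,\infty) \to (0,\infty)$ be non-increasing with $\phi(x) = x u(x)$ non-decreasing. Fix vectors $x_1, \dots, x_n \in \mathbb{R}^p$ and define, for $d = (d_1,\dots,d_n)$ with all $d_i > 0$, $h_j(d) = \frac{1}{p} x_j^\top \left( \frac{1}{n} \sum_{i=1}^n u(d_i) x_i x_i^\top \right)^{-1} x_j$ (assuming the matrix is invertible). If $d$ is a fixed point of $h$ and $S = \frac{1}{n}\sum_i x_i x_i^\top$ is invertible, then for every $j$, $\frac{1}{p} x_{j_{\min}}^\top S^{-1} x_{j_{\min}} \le \phi(d_j) \le \frac{1}{p} x_{j_{\max}}^\top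 S^{-1} x_{j_{\max}}$, where $j_{\min}$ and $j_{\max}$ are indices minimizing and maximizing $d_j$ respectively. -/
open Matrix

/-- Weighted sample covariance `(1/n) ∑ u(dᵢ) xᵢ xᵢᵀ`. -/
noncomputable def weightedCov {n p : ℕ} (x : Fin n → Fin p → ℝ) (u : ℝ → ℝ)
    (d : Fin n → ℝ) : Matrix (Fin p) (Fin p) ℝ :=
  (n : ℝ)⁻¹ • ∑ i, u (d i) • vecMulVec (x i) (x i)

/-! Since `u` is non-increasing, the weights of the weighted covariance `W` at the fixed point `d`
lie between `u (d jmax)` and `u (d jmin)`, so `u (d jmax) • S ≤ W ≤ u (d jmin) • S` in the Loewner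
order. Inversion reverses the Loewner order; evaluating the fixed-point equation at `jmax` and at
`jmin` then bounds `φ (d jmax)` above and `φ (d jmin)` below by the `S⁻¹`-quadratic forms, and the
monotonicity of `φ` carries both bounds to every `d j`. -/

open scoped MatrixOrder

namespace Matrix

variable {m : Type*} [Fintype m] [DecidableEq m]

theorem dotProduct_inv_mulVec_le_of_le {A B : Matrix m m ℝ} (hB : 0 ≤ B) (hBA : B ≤ A)
    (hA : IsUnit A.det) (hBdet : IsUnit B.det) (v : m → ℝ) :
    v ⬝ᵥ (A⁻¹ *ᵥ v) ≤ v ⬝ᵥ (B⁻¹ *ᵥ v) := by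
  set y := A⁻¹ *ᵥ v
  set w := B⁻¹ *ᵥ v
  have hAy : A *ᵥ y = v := by simp [y, mulVec_mulVec, mul_nonsing_inv A hA]
  have hBw : B *ᵥ w = v := by simp [w, mulVec_mulVec, mul_nonsing_inv B hBdet]
  have hBpsd := nonneg_iff_posSemidef.1 hB
  have hwBy : w ⬝ᵥ (B *ᵥ y) = v ⬝ᵥ y := by
    rw [dotProduct_mulVec, ← mulVec_transpose, ← conjTranspose_eq_transpose_of_trivial,
      hBpsd.isHermitian.eq, hBw]
  -- `(y - w)ᵀ B (y - w) ≥ 0` and `yᵀ (A - B) y ≥ 0` add up to `vᵀ y ≤ vᵀ w`.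
  have hsq : 0 ≤ (y - w) ⬝ᵥ (B *ᵥ (y - w)) := by
    simpa using hBpsd.dotProduct_mulVec_nonneg (y - w)
  have hgap : 0 ≤ y ⬝ᵥ ((A - B) *ᵥ y) := by
    simpa using (le_iff.1 hBA).dotProduct_mulVec_nonneg y
  rw [mulVec_sub, dotProduct_sub, sub_dotProduct, sub_dotProduct, hwBy, hBw] at hsq
  rw [sub_mulVec, dotProduct_sub, hAy] at hgap
  linarith [dotProduct_comm v y, dotProduct_comm v w]

theorem dotProduct_inv_smul_mulVec {S : Matrix m m ℝ} (hS : IsUnit S.det) {c : ℝ} (hc : c ≠ 0)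
    (v : m → ℝ) : v ⬝ᵥ ((c • S)⁻¹ *ᵥ v) = c⁻¹ * (v ⬝ᵥ (S⁻¹ *ᵥ v)) := by
  have hsmul_inv : (c • S)⁻¹ = c⁻¹ • S⁻¹ := inv_eq_right_inv <| by
    rw [smul_mul_smul_comm, mul_nonsing_inv _ hS, mul_inv_cancel₀ hc, one_smul]
  rw [hsmul_inv, smul_mulVec, dotProduct_smul, smul_eq_mul]

theorem isUnit_det_smul {S : Matrix m m ℝ} (hS : IsUnit S.det) {c : ℝ} (hc : c ≠ 0) :
    IsUnit (c • S).det := by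
  rw [det_smul]
  exact (isUnit_iff_ne_zero.2 hc).pow _ |>.mul hS

theorem dotProduct_inv_mulVec_le_smul_of_le_smul {S W : Matrix m m ℝ} (hS : IsUnit S.det)
    (hW : IsUnit W.det) (hW0 : 0 ≤ W) {c : ℝ} (hc : 0 < c) (hWS : W ≤ c • S) (v : m → ℝ) :
    v ⬝ᵥ (S⁻¹ *ᵥ v) ≤ c * (v ⬝ᵥ (W⁻¹ *ᵥ v)) := by
  have h := dotProduct_inv_mulVec_le_of_le hW0 hWS (isUnit_det_smul hS hc.ne') hW v
  rwa [dotProduct_inv_smul_mulVec hS hc.ne', inv_mul_le_iff₀ hc] at h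

theorem smul_dotProduct_inv_mulVec_le_of_smul_le {S W : Matrix m m ℝ} (hS : IsUnit S.det)
    (hW : IsUnit W.det) (hS0 : 0 ≤ S) {c : ℝ} (hc : 0 < c) (hSW : c • S ≤ W) (v : m → ℝ) :
    c * (v ⬝ᵥ (W⁻¹ *ᵥ v)) ≤ v ⬝ᵥ (S⁻¹ *ᵥ v) := by
  have h := dotProduct_inv_mulVec_le_of_le (smul_nonneg hc.le hS0) hSW hW
    (isUnit_det_smul hS hc.ne') v
  rwa [dotProduct_inv_smul_mulVec hS hc.ne', le_inv_mul_iff₀ hc] at h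

end Matrix

section Covariance

variable {n p : ℕ} (x : Fin n → Fin p → ℝ)

theorem posSemidef_sum_smul_vecMulVec_self {w : Fin n → ℝ} (hw : ∀ i, 0 ≤ w i) :
    (∑ i, w i • vecMulVec (x i) (x i)).PosSemidef :=
  posSemidef_sum _ fun i _ => (posSemidef_vecMulVec_self_star (x i)).smul (hw i)

theorem sampleCov_nonneg : 0 ≤ sampleCov x :=
  nonneg_iff_posSemidef.2 <|
    (posSemidef_sum _ fun i _ => posSemidef_vecMulVec_self_star (x i)).smul
      (inv_nonneg.2 n.cast_nonneg)

theorem weightedCov_nonneg {u : ℝ → ℝ} {d : Fin n → ℝ} (h : ∀ i, 0 ≤ u (d i)) :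
    0 ≤ weightedCov x u d :=
  nonneg_iff_posSemidef.2 <|
    (posSemidef_sum_smul_vecMulVec_self x h).smul (inv_nonneg.2 n.cast_nonneg)

theorem weightedCov_le_weightedCov {u u' : ℝ → ℝ} {d d' : Fin n → ℝ}
    (h : ∀ i, u (d i) ≤ u' (d' i)) : weightedCov x u d ≤ weightedCov x u' d' := by
  rw [le_iff, weightedCov, weightedCov, ← smul_sub, ← Finset.sum_sub_distrib]
  simp_rw [← sub_smul]
  exact (posSemidef_sum_smul_vecMulVec_self x fun i => sub_nonneg.2 (h i)).smul
    (inv_nonneg.2 n.cast_nonneg)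

theorem weightedCov_const (c : ℝ) (d : Fin n → ℝ) :
    weightedCov x (fun _ => c) d = c • sampleCov x := by
  simp only [weightedCov, sampleCov, ← Finset.smul_sum, smul_comm c]

theorem weightedCov_le_smul_sampleCov {u : ℝ → ℝ} {d : Fin n → ℝ} {c : ℝ}
    (h : ∀ i, u (d i) ≤ c) : weightedCov x u d ≤ c • sampleCov x :=
  weightedCov_const x c d ▸ weightedCov_le_weightedCov x h

theorem smul_sampleCov_le_weightedCov {u : ℝ → ℝ} {d : Fin n → ℝ} {c : ℝ}
    (h : ∀ i, c ≤ u (d i)) : c • sampleCov x ≤ weightedCov x u d :=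
  weightedCov_const x c d ▸ weightedCov_le_weightedCov x h

end Covariance

theorem stmt4_general {n p : ℕ}
    (u : ℝ → ℝ) (hu_pos : ∀ y > 0, 0 < u y) (hu_anti : AntitoneOn u (Set.Ioi 0))
    (hφ_mono : MonotoneOn (fun y => y * u y) (Set.Ioi 0))
    (x : Fin n → Fin p → ℝ) (d : Fin n → ℝ) (hd : ∀ i, 0 < d i)
    (hS : IsUnit (sampleCov x).det)
    (hinv : ∀ e : Fin n → ℝ, (∀ i, 0 < e i) → IsUnit (weightedCov x u e).det)
    (hfix : ∀ j, (p : ℝ)⁻¹ * (x j ⬝ᵥ ((weightedCov x u d)⁻¹ *ᵥ x j)) = d j)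
    (jmin jmax : Fin n) (hjmin : ∀ j, d jmin ≤ d j) (hjmax : ∀ j, d j ≤ d jmax) :
    ∀ j,
      (p : ℝ)⁻¹ * (x jmin ⬝ᵥ ((sampleCov x)⁻¹ *ᵥ x jmin)) ≤ d j * u (d j) ∧
      d j * u (d j) ≤ (p : ℝ)⁻¹ * (x jmax ⬝ᵥ ((sampleCov x)⁻¹ *ᵥ x jmax)) := by
  intro j
  have hu k : 0 < u (d k) := hu_pos _ (hd k)
  have hW := hinv d hd
  constructor
  · calc (p : ℝ)⁻¹ * (x jmin ⬝ᵥ ((sampleCov x)⁻¹ *ᵥ x jmin))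
        ≤ (p : ℝ)⁻¹ * (u (d jmin) * (x jmin ⬝ᵥ ((weightedCov x u d)⁻¹ *ᵥ x jmin))) := by
          gcongr
          refine dotProduct_inv_mulVec_le_smul_of_le_smul hS hW
            (weightedCov_nonneg x fun i => (hu i).le) (hu jmin) ?_ _
          exact weightedCov_le_smul_sampleCov x fun i => hu_anti (hd jmin) (hd i) (hjmin i)
      _ = d jmin * u (d jmin) := by linear_combination u (d jmin) * hfix jmin
      _ ≤ d j * u (d j) := hφ_mono (hd jmin) (hd j) (hjmin j)
  · calc d j * u (d j) ≤ d jmax * u (d jmax) := hφ_mono (hd j) (hd jmax) (hjmax j)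
      _ = (p : ℝ)⁻¹ * (u (d jmax) * (x jmax ⬝ᵥ ((weightedCov x u d)⁻¹ *ᵥ x jmax))) := by
          linear_combination -(u (d jmax) * hfix jmax)
      _ ≤ (p : ℝ)⁻¹ * (x jmax ⬝ᵥ ((sampleCov x)⁻¹ *ᵥ x jmax)) := by
          gcongr
          refine smul_dotProduct_inv_mulVec_le_of_smul_le hS hW (sampleCov_nonneg x) (hu jmax) ?_ _
          exact smul_sampleCov_le_weightedCov x fun i => hu_anti (hd i) (hd jmax) (hjmax i)

theorem stmt4 {n p : ℕ} (hn : 0 < n) (hp : 0 < p)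
    (u : ℝ → ℝ) (hu_pos : ∀ y > 0, 0 < u y) (hu_anti : AntitoneOn u (Set.Ioi 0))
    (hφ_mono : MonotoneOn (fun y => y * u y) (Set.Ioi 0))
    (x : Fin n → Fin p → ℝ) (d : Fin n → ℝ) (hd : ∀ i, 0 < d i)
    (hS : IsUnit (sampleCov x).det)
    (hinv : ∀ e : Fin n → ℝ, (∀ i, 0 < e i) → IsUnit (weightedCov x u e).det)
    (hfix : ∀ j, (p : ℝ)⁻¹ * (x j ⬝ᵥ ((weightedCov x u d)⁻¹ *ᵥ x j)) = d j)
    (jmin jmax : Fin n) (hjmin : ∀ j, d jmin ≤ d j) (hjmax : ∀ j, d j ≤ d jmax) :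
    ∀ j,
      (p : ℝ)⁻¹ * (x jmin ⬝ᵥ ((sampleCov x)⁻¹ *ᵥ x jmin)) ≤ d j * u (d j) ∧
      d j * u (d j) ≤ (p : ℝ)⁻¹ * (x jmax ⬝ᵥ ((sampleCov x)⁻¹ *ᵥ x jmax)) :=
  stmt4_general u hu_pos hu_anti hφ_mono x d hd hS hinv hfix jmin jmax hjmin hjmax
end

section
/- Let $h : \mathbb{R}^p \to \mathbb{R}^p$ be differentiable, $w_0 \in \mathbb{R}^p$, and $L, R > 0$, $0 < \epsilon \le \min\{R, L^{-1}\}$. Suppose (I) $\|h(w_0)\|_\infty \le \epsilon/2$; (II) the Jacobian satisfies $\nabla h(w_0) = I$; (III) $\|\nabla h(w) - \nabla h(w_0)\|_{\infty,\infty} \le L \|w - w_0\|_\infty$ for all $w$ with $\|w - w_0\|_\infty \le R$. Then $h$ has a zero $\hat{w}$ with $\|\hat{w} - w_0\|_\infty \le \epsilon$. -/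
/-- The Jacobian matrix of a map `h : ℝᵖ → ℝᵖ`, with entries `(∇h)_{jℓ} = ∂h_j/∂w_ℓ`. -/
noncomputable def jacobian {p : ℕ} (h : (Fin p → ℝ) → (Fin p → ℝ)) (w : Fin p → ℝ) :
    Matrix (Fin p) (Fin p) ℝ :=
  fun j ℓ => fderiv ℝ h w (Pi.single ℓ 1) j

/-!
With `g w = w - h w`, condition (II) gives `Dg(w) = ∇h(w₀) - ∇h(w)`, so by (III)
`‖Dg(w)‖ ≤ L‖w - w₀‖ ≤ Lε ≤ 1` on the ball `B = B̄(w₀, ε)`: `g` is nonexpansive on `B`.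
Integrating along segments gives `‖g w - g w₀‖ ≤ (L/2)‖w - w₀‖² ≤ ε/2`, which with (I) shows
that `g` maps `B` into itself. Since `Lε = 1` is allowed, `g` need not be a contraction; instead,
a nonexpansive self-map of a compact convex set has a fixed point: the contractions
`w₀ + t • (g - w₀)`, `t < 1`, have fixed points at which `‖g w - w‖ ≤ (1 - t) diam B`, so the
minimum of `‖g w - w‖` over `B` is `0`. A fixed point of `g` is a zero of `h`.
-/

open Set Filter Topology Metric

section FixedPoint

variable {E : Type*} [NormedAddCommGroup E] [NormedSpace ℝ E] {K : Set E} {f : E → E}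

theorem exists_norm_sub_le_of_lipschitzOnWith_one (hKc : IsCompact K) (hKconv : Convex ℝ K)
    (hmaps : MapsTo f K K) (hf : LipschitzOnWith 1 f K) {x₀ : E} (hx₀ : x₀ ∈ K) {t : ℝ}
    (ht : t ∈ Ico 0 1) : ∃ x ∈ K, ‖f x - x‖ ≤ (1 - t) * diam K := by
  set F : E → E := fun x => x₀ + t • (f x - x₀)
  have hFmaps : MapsTo F K K := fun x hx =>
    hKconv.add_smul_sub_mem hx₀ (hmaps hx) ⟨ht.1, ht.2.le⟩
  have hFlip : LipschitzOnWith ⟨t, ht.1⟩ F K := by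
    refine LipschitzOnWith.of_dist_le_mul fun x hx y hy => ?_
    calc dist (F x) (F y) = t * dist (f x) (f y) := by
          simp only [F, dist_eq_norm, add_sub_add_left_eq_sub, ← smul_sub, sub_sub_sub_cancel_right,
            norm_smul, Real.norm_of_nonneg ht.1]
      _ ≤ t * dist x y := by
          simpa using mul_le_mul_of_nonneg_left (hf.dist_le_mul x hx y hy) ht.1
  obtain ⟨y, hyK, hyfix, -⟩ := ContractingWith.exists_fixedPoint' hKc.isComplete hFmaps
    ⟨ht.2, hFlip.mapsToRestrict hFmaps⟩ hx₀ (edist_ne_top _ _)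
  refine ⟨y, hyK, ?_⟩
  have hy : f y - y = (1 - t) • (f y - x₀) := by
    calc f y - y = f y - F y := by rw [hyfix.eq]
      _ = (1 - t) • (f y - x₀) := by simp only [F, sub_smul, one_smul]; abel
  calc ‖f y - y‖ = (1 - t) * dist (f y) x₀ := by
        rw [hy, norm_smul, Real.norm_of_nonneg (by linarith [ht.2]), dist_eq_norm]
    _ ≤ (1 - t) * diam K :=
        mul_le_mul_of_nonneg_left (dist_le_diam_of_mem hKc.isBounded (hmaps hyK) hx₀)
          (by linarith [ht.2])

theorem exists_fixedPoint_of_lipschitzOnWith_one (hKc : IsCompact K) (hKconv : Convex ℝ K)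
    (hKne : K.Nonempty) (hmaps : MapsTo f K K) (hf : LipschitzOnWith 1 f K) :
    ∃ x ∈ K, Function.IsFixedPt f x := by
  obtain ⟨x₀, hx₀⟩ := hKne
  obtain ⟨x, hxK, hmin⟩ := hKc.exists_isMinOn ⟨x₀, hx₀⟩ (hf.continuousOn.sub continuousOn_id).norm
  have hsmall : ∀ᶠ t in 𝓝[<] (1 : ℝ), ‖f x - x‖ ≤ (1 - t) * diam K :=
    Filter.mem_of_superset (Ico_mem_nhdsLT zero_lt_one) fun t ht => by
      obtain ⟨y, hyK, hy⟩ := exists_norm_sub_le_of_lipschitzOnWith_one hKc hKconv hmaps hf hx₀ ht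
      exact (hmin hyK).trans hy
  have hlim : Tendsto (fun t : ℝ => (1 - t) * diam K) (𝓝[<] 1) (𝓝 0) :=
    tendsto_nhdsWithin_of_tendsto_nhds
      (Continuous.tendsto' (by fun_prop) 1 0 (by simp))
  exact ⟨x, hxK, sub_eq_zero.1 (norm_le_zero_iff.1 (ge_of_tendsto hlim hsmall))⟩

end FixedPoint

section Newton

variable {E F : Type*} [NormedAddCommGroup E] [NormedSpace ℝ E]
  [NormedAddCommGroup F] [NormedSpace ℝ F]

theorem norm_sub_le_of_norm_fderiv_le_mul_norm_sub {f : E → F} {x₀ x : E} {r L : ℝ}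
    (hf : ∀ y ∈ closedBall x₀ r, DifferentiableAt ℝ f y)
    (hbound : ∀ y ∈ closedBall x₀ r, ‖fderiv ℝ f y‖ ≤ L * ‖y - x₀‖)
    (hx : x ∈ closedBall x₀ r) : ‖f x - f x₀‖ ≤ L / 2 * ‖x - x₀‖ ^ 2 := by
  set v := x - x₀
  have hseg : ∀ t ∈ Icc (0 : ℝ) 1, x₀ + t • v ∈ closedBall x₀ r := fun t ht =>
    (convex_closedBall x₀ r).add_smul_sub_mem (mem_closedBall_self (dist_nonneg.trans hx)) hx ht
  have hφ : ∀ t ∈ Icc (0 : ℝ) 1,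
      HasDerivAt (fun s : ℝ => f (x₀ + s • v) - f x₀) (fderiv ℝ f (x₀ + t • v) v) t := by
    intro t ht
    have hline : HasDerivAt (fun s : ℝ => x₀ + s • v) v t := by
      simpa using ((hasDerivAt_id t).smul_const v).const_add x₀
    exact ((hf _ (hseg t ht)).hasFDerivAt.comp_hasDerivAt t hline).sub_const (f x₀)
  have hB : ∀ t : ℝ, HasDerivAt (fun s => L / 2 * ‖v‖ ^ 2 * s ^ 2) (L * ‖v‖ ^ 2 * t) t :=
    fun t => ((hasDerivAt_pow 2 t).const_mul _).congr_deriv (by ring)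
  have hbound' : ∀ t ∈ Ico (0 : ℝ) 1, ‖fderiv ℝ f (x₀ + t • v) v‖ ≤ L * ‖v‖ ^ 2 * t := by
    intro t ht
    calc ‖fderiv ℝ f (x₀ + t • v) v‖ ≤ ‖fderiv ℝ f (x₀ + t • v)‖ * ‖v‖ :=
          ContinuousLinearMap.le_opNorm _ _
      _ ≤ L * ‖x₀ + t • v - x₀‖ * ‖v‖ :=
          mul_le_mul_of_nonneg_right (hbound _ (hseg t (Ico_subset_Icc_self ht))) (norm_nonneg v)
      _ = L * ‖v‖ ^ 2 * t := by
          rw [add_sub_cancel_left, norm_smul, Real.norm_of_nonneg ht.1]; ring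
  have := image_norm_le_of_norm_deriv_right_le_deriv_boundary
    (fun t ht => (hφ t ht).continuousAt.continuousWithinAt)
    (fun t ht => (hφ t (Ico_subset_Icc_self ht)).hasDerivWithinAt) (by simp) hB hbound'
    (right_mem_Icc.2 zero_le_one)
  simpa [v] using this

theorem exists_zero_of_fderiv_eq_id_of_norm_fderiv_sub_le [ProperSpace E] {h : E → E} {x₀ : E}
    {L ε : ℝ} (hL : 0 ≤ L) (hLε : L * ε ≤ 1) (hh : ‖h x₀‖ ≤ ε / 2)
    (hdiff : ∀ x ∈ closedBall x₀ ε, DifferentiableAt ℝ h x)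
    (hid : fderiv ℝ h x₀ = ContinuousLinearMap.id ℝ E)
    (hlip : ∀ x ∈ closedBall x₀ ε, ‖fderiv ℝ h x - fderiv ℝ h x₀‖ ≤ L * ‖x - x₀‖) :
    ∃ x ∈ closedBall x₀ ε, h x = 0 := by
  have hε : 0 ≤ ε := by linarith [norm_nonneg (h x₀)]
  set g : E → E := fun x => x - h x
  have hgdiff : ∀ x ∈ closedBall x₀ ε, DifferentiableAt ℝ g x := fun x hx =>
    differentiableAt_id.sub (hdiff x hx)
  have hg' : ∀ x ∈ closedBall x₀ ε, ‖fderiv ℝ g x‖ ≤ L * ‖x - x₀‖ := by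
    intro x hx
    rw [fderiv_fun_sub differentiableAt_fun_id (hdiff x hx), fderiv_fun_id, ← hid, norm_sub_rev]
    exact hlip x hx
  have hg'_le_one : ∀ x ∈ closedBall x₀ ε, ‖fderiv ℝ g x‖₊ ≤ 1 := by
    intro x hx
    rw [← NNReal.coe_le_coe, coe_nnnorm, NNReal.coe_one]
    have := mem_closedBall_iff_norm.1 hx
    nlinarith [hg' x hx, norm_nonneg (x - x₀)]
  have hmaps : MapsTo g (closedBall x₀ ε) (closedBall x₀ ε) := by
    intro x hx
    have hquad := norm_sub_le_of_norm_fderiv_le_mul_norm_sub hgdiff hg' hx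
    have hx' := mem_closedBall_iff_norm.1 hx
    rw [mem_closedBall_iff_norm]
    calc ‖g x - x₀‖ = ‖(g x - g x₀) - h x₀‖ := by simp only [g]; abel_nf
      _ ≤ ‖g x - g x₀‖ + ‖h x₀‖ := norm_sub_le _ _
      _ ≤ L / 2 * ε ^ 2 + ε / 2 := by gcongr; exact hquad.trans (by gcongr)
      _ ≤ ε := by nlinarith
  obtain ⟨x, hx, hfix⟩ := exists_fixedPoint_of_lipschitzOnWith_one (isCompact_closedBall x₀ ε)
    (convex_closedBall x₀ ε) (nonempty_closedBall.2 hε) hmaps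
    ((convex_closedBall x₀ ε).lipschitzOnWith_of_nnnorm_fderiv_le hgdiff hg'_le_one)
  exact ⟨x, hx, by simpa [g] using hfix.eq⟩

end Newton

section Jacobian

open scoped Matrix.Norms.Operator

theorem Matrix.linfty_opNorm_le_of_sum_norm_le {m n α : Type*} [Fintype m] [Fintype n]
    [SeminormedAddCommGroup α] {A : Matrix m n α} {C : ℝ} (hC : 0 ≤ C)
    (hA : ∀ i, ∑ j, ‖A i j‖ ≤ C) : ‖A‖ ≤ C := by
  lift C to NNReal using hC
  rw [Matrix.linfty_opNorm_def, NNReal.coe_le_coe, Finset.sup_le_iff]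
  intro i _
  rw [← NNReal.coe_le_coe, NNReal.coe_sum]
  simpa using hA i

variable {p : ℕ}

theorem jacobian_eq_toMatrix' (h : (Fin p → ℝ) → (Fin p → ℝ)) (w : Fin p → ℝ) :
    jacobian h w = LinearMap.toMatrix' (fderiv ℝ h w : (Fin p → ℝ) →ₗ[ℝ] (Fin p → ℝ)) := by
  ext j ℓ
  rw [LinearMap.toMatrix'_apply]
  rfl

theorem fderiv_eq_id_of_jacobian_eq_one {h : (Fin p → ℝ) → (Fin p → ℝ)} {w : Fin p → ℝ}
    (hJ : jacobian h w = 1) :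
    fderiv ℝ h w = ContinuousLinearMap.id ℝ (Fin p → ℝ) := by
  rw [jacobian_eq_toMatrix', ← LinearMap.toMatrix'_id] at hJ
  exact ContinuousLinearMap.coe_injective (LinearMap.toMatrix'.injective hJ)

theorem norm_fderiv_sub_le_of_jacobian {h : (Fin p → ℝ) → (Fin p → ℝ)} {w w' : Fin p → ℝ}
    {C : ℝ} (hC : 0 ≤ C)
    (hJ : ∀ j, ∑ ℓ, |jacobian h w j ℓ - jacobian h w' j ℓ| ≤ C) :
    ‖fderiv ℝ h w - fderiv ℝ h w'‖ ≤ C := by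
  rw [← Matrix.linfty_opNorm_toMatrix, ContinuousLinearMap.toLinearMap_sub, map_sub,
    ← jacobian_eq_toMatrix', ← jacobian_eq_toMatrix']
  exact Matrix.linfty_opNorm_le_of_sum_norm_le hC fun j => by simpa using hJ j

end Jacobian

theorem stmt5_general {p : ℕ} (h : (Fin p → ℝ) → (Fin p → ℝ)) (hdiff : Differentiable ℝ h)
    (w0 : Fin p → ℝ) (L R ε : ℝ) (hL : 0 < L)
    (hεle : ε ≤ min R L⁻¹)
    (h1 : ‖h w0‖ ≤ ε / 2)
    (h2 : jacobian h w0 = 1)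
    (h3 : ∀ w : Fin p → ℝ, ‖w - w0‖ ≤ R →
      ∀ j, ∑ ℓ, |jacobian h w j ℓ - jacobian h w0 j ℓ| ≤ L * ‖w - w0‖) :
    ∃ wstar : Fin p → ℝ, h wstar = 0 ∧ ‖wstar - w0‖ ≤ ε := by
  have hLε : L * ε ≤ 1 := by
    calc L * ε ≤ L * L⁻¹ := mul_le_mul_of_nonneg_left (hεle.trans (min_le_right _ _)) hL.le
      _ = 1 := mul_inv_cancel₀ hL.ne'
  have hlip : ∀ w ∈ closedBall w0 ε, ‖fderiv ℝ h w - fderiv ℝ h w0‖ ≤ L * ‖w - w0‖ :=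
    fun w hw => norm_fderiv_sub_le_of_jacobian (by positivity) <|
      h3 w ((mem_closedBall_iff_norm.1 hw).trans (hεle.trans (min_le_left _ _)))
  obtain ⟨w, hw, hzero⟩ := exists_zero_of_fderiv_eq_id_of_norm_fderiv_sub_le hL.le hLε h1
    (fun w _ => hdiff w) (fderiv_eq_id_of_jacobian_eq_one h2) hlip
  exact ⟨w, hzero, mem_closedBall_iff_norm.1 hw⟩

theorem stmt5 {p : ℕ} (h : (Fin p → ℝ) → (Fin p → ℝ)) (hdiff : Differentiable ℝ h)
    (w0 : Fin p → ℝ) (L R ε : ℝ) (hL : 0 < L) (hR : 0 < R)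
    (hε : 0 < ε) (hεle : ε ≤ min R L⁻¹)
    (h1 : ‖h w0‖ ≤ ε / 2)
    (h2 : jacobian h w0 = 1)
    (h3 : ∀ w : Fin p → ℝ, ‖w - w0‖ ≤ R →
      ∀ j, ∑ ℓ, |jacobian h w j ℓ - jacobian h w0 j ℓ| ≤ L * ‖w - w0‖) :
    ∃ wstar : Fin p → ℝ, h wstar = 0 ∧ ‖wstar - w0‖ ≤ ε :=
  stmt5_general h hdiff w0 L R ε hL hεle h1 h2 h3
end

section
/- Let $K \in \mathbb{R}^{m \times p}$ with rows $w_1^\top, \dots, w_m^\top$, let $K_j$ denote $K$ with row $j$ removed, and let $\epsilon > 0$. Then the $j$-th diagonal entry of $(K K^\top + \epsilon I_m)^{-1}$ equals $\left( \epsilon + \epsilon \, w_j^\top (K_j^\top K_j + \epsilon I_p)^{-1} w_j \right)^{-1}$. -/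
/-!
The push-through identity `(K Kᵀ + ε) K = K (Kᵀ K + ε)` gives
`(K Kᵀ + ε)⁻¹ = ε⁻¹ (1 - K (Kᵀ K + ε)⁻¹ Kᵀ)`, whose `j`-th diagonal entry is
`ε⁻¹ (1 - wⱼᵀ (Kᵀ K + ε)⁻¹ wⱼ)`. Removing row `j` splits `Kᵀ K = Kⱼᵀ Kⱼ + wⱼ wⱼᵀ`, and the
Sherman–Morrison formula turns `1 - wⱼᵀ (Kⱼᵀ Kⱼ + ε + wⱼ wⱼᵀ)⁻¹ wⱼ` into
`(1 + wⱼᵀ (Kⱼᵀ Kⱼ + ε)⁻¹ wⱼ)⁻¹`.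
-/

open Matrix

namespace Matrix

variable {ι n α : Type*}

theorem transpose_mul_self_eq_submatrix_ne_add_vecMulVec [Fintype ι] [DecidableEq ι]
    [CommSemiring α] (K : Matrix ι n α) (j : ι) :
    Kᵀ * K = (K.submatrix (fun i : {i : ι // i ≠ j} => (i : ι)) id)ᵀ
        * K.submatrix (fun i : {i : ι // i ≠ j} => (i : ι)) id + vecMulVec (K j) (K j) := by
  ext a b
  simp only [mul_apply, transpose_apply, add_apply, vecMulVec_apply, submatrix_apply, id_eq]
  rw [Fintype.sum_eq_add_sum_subtype_ne _ j, add_comm]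

theorem mul_mul_transpose_apply [Fintype n] [CommSemiring α] (A : Matrix ι n α)
    (B : Matrix n n α) (C : Matrix ι n α) (i k : ι) : (A * B * Cᵀ) i k = A i ⬝ᵥ (B *ᵥ C k) := by
  rw [Matrix.mul_assoc]
  simp [mul_apply, dotProduct, mulVec, Finset.mul_sum]

theorem inv_mul_transpose_add_smul_one [Fintype ι] [Fintype n] [DecidableEq ι] [DecidableEq n]
    [Field α] (K : Matrix ι n α) {ε : α} (hε : ε ≠ 0)
    (hC : IsUnit (Kᵀ * K + ε • (1 : Matrix n n α)).det) :
    (K * Kᵀ + ε • (1 : Matrix ι ι α))⁻¹ = ε⁻¹ • (1 - K * (Kᵀ * K + ε • 1)⁻¹ * Kᵀ) := by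
  apply inv_eq_right_inv
  have push_through : (K * Kᵀ + ε • 1) * K = K * (Kᵀ * K + ε • 1) := by
    simp only [Matrix.add_mul, Matrix.mul_add, Matrix.mul_assoc, Matrix.smul_mul,
      Matrix.mul_smul, Matrix.one_mul, Matrix.mul_one]
  rw [Matrix.mul_smul, Matrix.mul_sub, Matrix.mul_one, ← Matrix.mul_assoc, ← Matrix.mul_assoc,
    push_through, Matrix.mul_assoc K, mul_nonsing_inv _ hC, Matrix.mul_one, add_sub_cancel_left,
    smul_smul, inv_mul_cancel₀ hε, one_smul]

theorem one_sub_dotProduct_inv_add_vecMulVec_mul [Fintype n] [DecidableEq n] [CommRing α]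
    {B : Matrix n n α} (u v : n → α) (hB : IsUnit B.det) (hC : IsUnit (B + vecMulVec u v).det) :
    (1 - v ⬝ᵥ ((B + vecMulVec u v)⁻¹ *ᵥ u)) * (1 + v ⬝ᵥ (B⁻¹ *ᵥ u)) = 1 := by
  set x := (B + vecMulVec u v)⁻¹ *ᵥ u
  have hBx : B *ᵥ x = (1 - v ⬝ᵥ x) • u := by
    have hCx : (B + vecMulVec u v) *ᵥ x = u := by
      rw [mulVec_mulVec, mul_nonsing_inv _ hC, one_mulVec]
    rw [add_mulVec, vecMulVec_mulVec, op_smul_eq_smul] at hCx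
    rw [sub_smul, one_smul]
    exact eq_sub_of_add_eq hCx
  have hx : x = (1 - v ⬝ᵥ x) • (B⁻¹ *ᵥ u) := by
    rw [← mulVec_smul, ← hBx, mulVec_mulVec, nonsing_inv_mul _ hB, one_mulVec]
  calc (1 - v ⬝ᵥ x) * (1 + v ⬝ᵥ (B⁻¹ *ᵥ u))
      = 1 - v ⬝ᵥ x + v ⬝ᵥ ((1 - v ⬝ᵥ x) • (B⁻¹ *ᵥ u)) := by
        rw [dotProduct_smul, smul_eq_mul]; ring
    _ = 1 := by rw [← hx]; ring

theorem isUnit_det_transpose_mul_self_add_smul_one [Fintype ι] [Fintype n] [DecidableEq n]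
    (K : Matrix ι n ℝ) {ε : ℝ} (hε : 0 < ε) :
    IsUnit (Kᵀ * K + ε • (1 : Matrix n n ℝ)).det := by
  rw [← isUnit_iff_isUnit_det]
  refine PosDef.isUnit (PosDef.posSemidef_add ?_ (PosDef.one.smul hε))
  simpa only [conjTranspose_eq_transpose_of_trivial] using posSemidef_conjTranspose_mul_self K

end Matrix

theorem stmt9 {m p : ℕ} (K : Matrix (Fin m) (Fin p) ℝ) (j : Fin m) (ε : ℝ) (hε : 0 < ε) :
    (K * Kᵀ + ε • (1 : Matrix (Fin m) (Fin m) ℝ))⁻¹ j j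
      = (ε + ε * (K j ⬝ᵥ
          (((K.submatrix (fun i : {i : Fin m // i ≠ j} => (i : Fin m)) id)ᵀ
              * K.submatrix (fun i : {i : Fin m // i ≠ j} => (i : Fin m)) id
            + ε • (1 : Matrix (Fin p) (Fin p) ℝ))⁻¹ *ᵥ K j)))⁻¹ := by
  set Kj := K.submatrix (fun i : {i : Fin m // i ≠ j} => (i : Fin m)) id
  have hC : Kᵀ * K + ε • 1 = (Kjᵀ * Kj + ε • 1) + vecMulVec (K j) (K j) := by
    rw [transpose_mul_self_eq_submatrix_ne_add_vecMulVec K j, add_right_comm]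
  have hK := isUnit_det_transpose_mul_self_add_smul_one K hε
  have hSM := one_sub_dotProduct_inv_add_vecMulVec_mul (K j) (K j)
    (isUnit_det_transpose_mul_self_add_smul_one Kj hε) (hC ▸ hK)
  rw [← hC] at hSM
  rw [inv_mul_transpose_add_smul_one K hε.ne' hK,
    Matrix.smul_apply, Matrix.sub_apply, one_apply_eq, mul_mul_transpose_apply, smul_eq_mul,
    eq_inv_of_mul_eq_one_left hSM, ← mul_inv, mul_one_add]
end

section
/- Let $Y, Y'$ be independent $\mathbb{R}^p$-valued random vectors, each satisfying the small-ball property with constant $C_0$: for every unit vector $u$, every $a \in \mathbb{R}$, and every $t \ge 0$, $\Pr(|u^\top Y - a| \le t) \le C_0 t$ (and likewise for $Y'$). Let $\zeta, \zeta'$ be random variables independent of $(Y,Y')$ with $\zeta^2 + \zeta'^2 = 1$ almost surely. Then $Y^{\circ} = \zeta Y + \zeta' Y'$ satisfies the small-ball property with constant $\sqrt{2}\,C_0$. -/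
open MeasureTheory ProbabilityTheory

lemma key_ineq (si x b t : ℝ) (ht : 0 ≤ t) (hs : 1/2 ≤ si^2)
    (h : |si * x + b| ≤ t) : |x - (-b/si)| ≤ Real.sqrt 2 * t := by
  have hsi : si ≠ 0 := by intro h0; rw [h0] at hs; norm_num at hs
  have hr : 1 ≤ Real.sqrt 2 * |si| := by
    have h1 : (1:ℝ) ≤ (Real.sqrt 2 * |si|)^2 := by
      rw [mul_pow, Real.sq_sqrt (by norm_num : (0:ℝ) ≤ 2), sq_abs]
      linarith
    nlinarith [mul_nonneg (Real.sqrt_nonneg 2) (abs_nonneg si)]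
  have hx : x - (-b/si) = (si * x + b)/si := by field_simp; ring
  rw [hx, abs_div, div_le_iff₀ (abs_pos.mpr hsi)]
  calc |si * x + b| ≤ t := h
    _ ≤ Real.sqrt 2 * t * |si| := by nlinarith [abs_nonneg si, Real.sqrt_nonneg 2]

lemma aux_real {Ω : Type*} [MeasurableSpace Ω] (μ : Measure Ω) [IsProbabilityMeasure μ]
    (X X' ζ ζ' : Ω → ℝ) (hX : Measurable X) (hX' : Measurable X')
    (hζ : Measurable ζ) (hζ' : Measurable ζ') (C₀ a t : ℝ) (ht : 0 ≤ t)
    (hsbX : ∀ c : ℝ, μ {ω | |X ω - c| ≤ Real.sqrt 2 * t} ≤ ENNReal.ofReal (Real.sqrt 2 * C₀ * t))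
    (hsbX' : ∀ c : ℝ, μ {ω | |X' ω - c| ≤ Real.sqrt 2 * t} ≤ ENNReal.ofReal (Real.sqrt 2 * C₀ * t))
    (hXX' : IndepFun X X' μ)
    (hind : IndepFun (fun ω => (ζ ω, ζ' ω)) (fun ω => (X ω, X' ω)) μ)
    (hunit : ∀ᵐ ω ∂μ, ζ ω ^ 2 + ζ' ω ^ 2 = 1) :
    μ {ω | |ζ ω * X ω + ζ' ω * X' ω - a| ≤ t} ≤ ENNReal.ofReal (Real.sqrt 2 * C₀ * t) := by
  have hmζ : Measurable fun ω => (ζ ω, ζ' ω) := hζ.prodMk hζ'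
  have hmX : Measurable fun ω => (X ω, X' ω) := hX.prodMk hX'
  set ν := μ.map (fun ω => (ζ ω, ζ' ω)) with hν
  have hmap : μ.map (fun ω => ((ζ ω, ζ' ω), (X ω, X' ω)))
      = ν.prod ((μ.map X).prod (μ.map X')) := by
    rw [(indepFun_iff_map_prod_eq_prod_map_map hmζ.aemeasurable hmX.aemeasurable).mp hind,
      (indepFun_iff_map_prod_eq_prod_map_map hX.aemeasurable hX'.aemeasurable).mp hXX']
  haveI : IsProbabilityMeasure (μ.map X) := Measure.isProbabilityMeasure_map hX.aemeasurable
  haveI : IsProbabilityMeasure (μ.map X') := Measure.isProbabilityMeasure_map hX'.aemeasurable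
  haveI : IsProbabilityMeasure ν := Measure.isProbabilityMeasure_map hmζ.aemeasurable
  have hSm : MeasurableSet {q : (ℝ×ℝ)×(ℝ×ℝ) | |q.1.1*q.2.1 + q.1.2*q.2.2 - a| ≤ t} :=
    measurableSet_le (by fun_prop) measurable_const
  have heq : μ {ω | |ζ ω * X ω + ζ' ω * X' ω - a| ≤ t}
      = (ν.prod ((μ.map X).prod (μ.map X')))
          {q : (ℝ×ℝ)×(ℝ×ℝ) | |q.1.1*q.2.1 + q.1.2*q.2.2 - a| ≤ t} := by
    rw [← hmap, Measure.map_apply (hmζ.prodMk hmX) hSm]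
    rfl
  rw [heq, Measure.prod_apply hSm]
  have hae : ∀ᵐ s ∂ν, s.1^2 + s.2^2 = 1 := by
    rw [hν]
    exact (ae_map_iff hmζ.aemeasurable
      (measurableSet_eq_fun (by fun_prop) measurable_const)).mpr hunit
  calc ∫⁻ s, ((μ.map X).prod (μ.map X'))
        (Prod.mk s ⁻¹' {q : (ℝ×ℝ)×(ℝ×ℝ) | |q.1.1*q.2.1 + q.1.2*q.2.2 - a| ≤ t}) ∂ν
      ≤ ∫⁻ _, ENNReal.ofReal (Real.sqrt 2 * C₀ * t) ∂ν := by
        refine lintegral_mono_ae (hae.mono fun s hs => ?_)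
        have hpre : MeasurableSet
            (Prod.mk s ⁻¹' {q : (ℝ×ℝ)×(ℝ×ℝ) | |q.1.1*q.2.1 + q.1.2*q.2.2 - a| ≤ t}) :=
          hSm.preimage measurable_prodMk_left
        have hcase : 1/2 ≤ s.1^2 ∨ 1/2 ≤ s.2^2 := by
          by_contra hcon
          push_neg at hcon
          nlinarith [hcon.1, hcon.2]
        rcases hcase with h1 | h2
        · rw [Measure.prod_apply_symm hpre]
          calc ∫⁻ y, (μ.map X) ((fun x => (x, y)) ⁻¹'
                (Prod.mk s ⁻¹' {q : (ℝ×ℝ)×(ℝ×ℝ) | |q.1.1*q.2.1 + q.1.2*q.2.2 - a| ≤ t}))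
                  ∂(μ.map X')
              ≤ ∫⁻ _, ENNReal.ofReal (Real.sqrt 2 * C₀ * t) ∂(μ.map X') := by
                refine lintegral_mono fun y => ?_
                calc (μ.map X) ((fun x => (x, y)) ⁻¹'
                      (Prod.mk s ⁻¹' {q : (ℝ×ℝ)×(ℝ×ℝ) | |q.1.1*q.2.1 + q.1.2*q.2.2 - a| ≤ t}))
                    ≤ (μ.map X) {x : ℝ | |x - (-(s.2*y - a)/s.1)| ≤ Real.sqrt 2 * t} := by
                      refine measure_mono fun x hx => ?_
                      have hx' : |s.1 * x + (s.2*y - a)| ≤ t := by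
                        rw [← add_sub_assoc]; exact hx
                      exact key_ineq s.1 x (s.2*y - a) t ht h1 hx'
                  _ = μ {ω | |X ω - (-(s.2*y - a)/s.1)| ≤ Real.sqrt 2 * t} := by
                      rw [Measure.map_apply hX (measurableSet_le (by fun_prop) measurable_const)]
                      rfl
                  _ ≤ ENNReal.ofReal (Real.sqrt 2 * C₀ * t) := hsbX _
            _ = ENNReal.ofReal (Real.sqrt 2 * C₀ * t) := by simp
        · rw [Measure.prod_apply hpre]
          calc ∫⁻ x, (μ.map X') (Prod.mk x ⁻¹'
                (Prod.mk s ⁻¹' {q : (ℝ×ℝ)×(ℝ×ℝ) | |q.1.1*q.2.1 + q.1.2*q.2.2 - a| ≤ t}))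
                  ∂(μ.map X)
              ≤ ∫⁻ _, ENNReal.ofReal (Real.sqrt 2 * C₀ * t) ∂(μ.map X) := by
                refine lintegral_mono fun x => ?_
                calc (μ.map X') (Prod.mk x ⁻¹'
                      (Prod.mk s ⁻¹' {q : (ℝ×ℝ)×(ℝ×ℝ) | |q.1.1*q.2.1 + q.1.2*q.2.2 - a| ≤ t}))
                    ≤ (μ.map X') {y : ℝ | |y - (-(s.1*x - a)/s.2)| ≤ Real.sqrt 2 * t} := by
                      refine measure_mono fun y hy => ?_
                      have hy' : |s.2 * y + (s.1*x - a)| ≤ t := by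
                        have : s.1*x + s.2*y - a = s.2 * y + (s.1*x - a) := by ring
                        rw [← this]; exact hy
                      exact key_ineq s.2 y (s.1*x - a) t ht h2 hy'
                  _ = μ {ω | |X' ω - (-(s.1*x - a)/s.2)| ≤ Real.sqrt 2 * t} := by
                      rw [Measure.map_apply hX' (measurableSet_le (by fun_prop) measurable_const)]
                      rfl
                  _ ≤ ENNReal.ofReal (Real.sqrt 2 * C₀ * t) := hsbX' _
            _ = ENNReal.ofReal (Real.sqrt 2 * C₀ * t) := by simp
    _ = ENNReal.ofReal (Real.sqrt 2 * C₀ * t) := by simp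

theorem stmt15 {p : ℕ} {Ω : Type*} [MeasurableSpace Ω]
    (μ : Measure Ω) [IsProbabilityMeasure μ]
    (Y Y' : Ω → EuclideanSpace ℝ (Fin p)) (ζ ζ' : Ω → ℝ)
    (hY : Measurable Y) (hY' : Measurable Y') (hζ : Measurable ζ) (hζ' : Measurable ζ')
    (C₀ : ℝ) (hC₀ : 0 < C₀)
    (hsbY : ∀ u : EuclideanSpace ℝ (Fin p), ‖u‖ = 1 → ∀ a : ℝ, ∀ t : ℝ, 0 ≤ t →
      μ {ω | |(inner ℝ u (Y ω) : ℝ) - a| ≤ t} ≤ ENNReal.ofReal (C₀ * t))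
    (hsbY' : ∀ u : EuclideanSpace ℝ (Fin p), ‖u‖ = 1 → ∀ a : ℝ, ∀ t : ℝ, 0 ≤ t →
      μ {ω | |(inner ℝ u (Y' ω) : ℝ) - a| ≤ t} ≤ ENNReal.ofReal (C₀ * t))
    (hindepYY' : IndepFun Y Y' μ)
    (hindepζ : IndepFun (fun ω => (ζ ω, ζ' ω)) (fun ω => (Y ω, Y' ω)) μ)
    (hunit : ∀ᵐ ω ∂μ, ζ ω ^ 2 + ζ' ω ^ 2 = 1) :
    ∀ u : EuclideanSpace ℝ (Fin p), ‖u‖ = 1 → ∀ a : ℝ, ∀ t : ℝ, 0 ≤ t →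
      μ {ω | |(inner ℝ u (ζ ω • Y ω + ζ' ω • Y' ω) : ℝ) - a| ≤ t}
        ≤ ENNReal.ofReal (Real.sqrt 2 * C₀ * t) := by
  intro u hu a t ht
  have hm : Measurable fun y : EuclideanSpace ℝ (Fin p) => (inner ℝ u y : ℝ) :=
    (continuous_const.inner continuous_id).measurable
  have h2t : 0 ≤ Real.sqrt 2 * t := mul_nonneg (Real.sqrt_nonneg 2) ht
  have hre : ∀ c : ℝ, ENNReal.ofReal (C₀ * (Real.sqrt 2 * t))
      = ENNReal.ofReal (Real.sqrt 2 * C₀ * t) := fun c => by ring_nf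
  have hgoal : {ω | |(inner ℝ u (ζ ω • Y ω + ζ' ω • Y' ω) : ℝ) - a| ≤ t}
      = {ω | |ζ ω * (inner ℝ u (Y ω) : ℝ) + ζ' ω * (inner ℝ u (Y' ω) : ℝ) - a| ≤ t} := by
    ext ω
    rw [Set.mem_setOf_eq, Set.mem_setOf_eq, inner_add_right, real_inner_smul_right,
      real_inner_smul_right]
  rw [hgoal]
  refine aux_real μ (fun ω => (inner ℝ u (Y ω) : ℝ)) (fun ω => (inner ℝ u (Y' ω) : ℝ)) ζ ζ'
    (hm.comp hY) (hm.comp hY') hζ hζ' C₀ a t ht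
    (fun c => le_trans (hsbY u hu c _ h2t) (le_of_eq (hre c)))
    (fun c => le_trans (hsbY' u hu c _ h2t) (le_of_eq (hre c)))
    (hindepYY'.comp hm hm)
    (hindepζ.comp measurable_id ((hm.comp measurable_fst).prodMk (hm.comp measurable_snd)))
    hunit
end
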